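/- arXiv:2604.06149 — 10 statements merged into one kernel-verified Lean document; each statement's English description precedes it below -/
import Mathlib

section
/- For every g ∈ G, one has Π * Q g * Π = ((c : ℂ) / (Fintype.card G : ℂ)) • Π. (This is the statement that the Page–Wootters reduction map R_R^g = √(|G|/c)(⟨φ(g)| ⊗ I)Π is an isometry on the gauge-invariant subspace, (R_R^g)† R_R^g = Π, expressed at the level of the gauge-fixing operators.) -/
open scoped Kronecker
open Matrix


lemma conj_vecMulVec {r : ℕ} (A : Matrix (Fin r) (Fin r) ℂ) (x : Fin r → ℂ) :
    A * Matrix.vecMulVec x (star x) * Aᴴ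
      = Matrix.vecMulVec (A.mulVec x) (star (A.mulVec x)) := by
  ext i j
  simp only [Matrix.mul_apply, Matrix.vecMulVec_apply, Matrix.conjTranspose_apply,
    Matrix.mulVec, dotProduct, Pi.star_apply, star_sum, star_mul',
    Finset.sum_mul, Finset.mul_sum]
  refine Finset.sum_congr rfl fun k _ => Finset.sum_congr rfl fun l _ => by ring

lemma sum_kron {ι : Type*} {r s : ℕ} (t : Finset ι) (f : ι → Matrix (Fin r) (Fin r) ℂ)
    (B : Matrix (Fin s) (Fin s) ℂ) :
    (∑ i ∈ t, f i) ⊗ₖ B = ∑ i ∈ t, (f i) ⊗ₖ B := by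
  ext p q
  simp [Matrix.kroneckerMap_apply, Matrix.sum_apply, Finset.sum_mul]


/-- For every `g ∈ G`, `Π * Q g * Π = (c / |G|) • Π`, where `Π` is the
gauge projector and `Q g` the gauge-fixing operators built from an orientation-state
family with resolution of identity `∑ g, |φ g⟩⟨φ g| = c • 1`.  This expresses that the
Page–Wootters reduction map is an isometry on the gauge-invariant subspace. -/
theorem gauge_fixing_isometry
    {G : Type*} [Group G] [Fintype G] {r s : ℕ}
    (U_R : G → Matrix (Fin r) (Fin r) ℂ)
    (U_S : G → Matrix (Fin s) (Fin s) ℂ)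
    (hR_mul : ∀ g h : G, U_R (g * h) = U_R g * U_R h)
    (hR_one : U_R 1 = 1)
    (hR_unitary : ∀ g : G, (U_R g)ᴴ * U_R g = 1)
    (hS_mul : ∀ g h : G, U_S (g * h) = U_S g * U_S h)
    (hS_one : U_S 1 = 1)
    (hS_unitary : ∀ g : G, (U_S g)ᴴ * U_S g = 1)
    (φ : G → (Fin r → ℂ))
    (hcov : ∀ g h : G, (U_R h).mulVec (φ g) = φ (h * g))
    (c : ℝ) (hc : 0 < c)
    (hres : ∑ g : G, Matrix.vecMulVec (φ g) (star (φ g))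
        = (c : ℂ) • (1 : Matrix (Fin r) (Fin r) ℂ))
    (Pg : Matrix (Fin r × Fin s) (Fin r × Fin s) ℂ)
    (hPg : Pg = (Fintype.card G : ℂ)⁻¹ • ∑ g : G, (U_R g) ⊗ₖ (U_S g))
    (Q : G → Matrix (Fin r × Fin s) (Fin r × Fin s) ℂ)
    (hQ : ∀ g : G, Q g = (Matrix.vecMulVec (φ g) (star (φ g))) ⊗ₖ
        (1 : Matrix (Fin s) (Fin s) ℂ)) :
    ∀ g : G, Pg * Q g * Pg = ((c : ℂ) / (Fintype.card G : ℂ)) • Pg := by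
  intro g
  have hN : (Fintype.card G : ℂ) ≠ 0 := by
    exact_mod_cast Nat.cast_ne_zero.mpr Fintype.card_ne_zero
  -- conjugate transpose is the inverse representation
  have hUinv : ∀ h : G, (U_R h)ᴴ = U_R h⁻¹ := by
    intro h
    calc (U_R h)ᴴ = (U_R h)ᴴ * (U_R h * U_R h⁻¹) := by
          rw [← hR_mul, mul_inv_cancel, hR_one, mul_one]
      _ = U_R h⁻¹ := by rw [← mul_assoc, hR_unitary, one_mul]
  set A : G → Matrix (Fin r) (Fin r) ℂ :=
    fun g => Matrix.vecMulVec (φ g) (star (φ g)) with hA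
  have key : ∀ h m : G, U_R h * A g * U_R (h⁻¹ * m) = A (h * g) * U_R m := by
    intro h m
    rw [hR_mul, ← mul_assoc, ← hUinv, hA]
    rw [show U_R h * Matrix.vecMulVec (φ g) (star (φ g)) * (U_R h)ᴴ * U_R m
        = (U_R h * Matrix.vecMulVec (φ g) (star (φ g)) * (U_R h)ᴴ) * U_R m from rfl,
      conj_vecMulVec, hcov]
  subst hPg
  rw [hQ g]
  set S : Matrix (Fin r × Fin s) (Fin r × Fin s) ℂ := ∑ g : G, (U_R g) ⊗ₖ (U_S g) with hS
  have main : S * ((A g) ⊗ₖ (1 : Matrix (Fin s) (Fin s) ℂ)) * S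
      = (c : ℂ) • S := by
    calc S * ((A g) ⊗ₖ 1) * S
        = ∑ h : G, ∑ k : G, ((U_R h) ⊗ₖ (U_S h)) * ((A g) ⊗ₖ 1) * ((U_R k) ⊗ₖ (U_S k)) := by
          rw [hS, Finset.sum_mul, Finset.sum_mul]
          exact Finset.sum_congr rfl fun h _ => by rw [Finset.mul_sum]
      _ = ∑ h : G, ∑ k : G, (U_R h * A g * U_R k) ⊗ₖ (U_S h * U_S k) := by
          refine Finset.sum_congr rfl fun h _ => Finset.sum_congr rfl fun k _ => ?_
          rw [← Matrix.mul_kronecker_mul, ← Matrix.mul_kronecker_mul, mul_one]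
      _ = ∑ h : G, ∑ m : G, (A (h * g) * U_R m) ⊗ₖ (U_S m) := by
          refine Finset.sum_congr rfl fun h _ => ?_
          rw [← Equiv.sum_comp (Equiv.mulLeft h⁻¹)
            (fun k => (U_R h * A g * U_R k) ⊗ₖ (U_S h * U_S k))]
          refine Finset.sum_congr rfl fun m _ => ?_
          simp only [Equiv.coe_mulLeft]
          rw [key, ← hS_mul, mul_inv_cancel_left]
      _ = ∑ m : G, ((∑ h : G, A (h * g)) * U_R m) ⊗ₖ (U_S m) := by
          rw [Finset.sum_comm]
          refine Finset.sum_congr rfl fun m _ => ?_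
          rw [Finset.sum_mul, sum_kron]
      _ = ∑ m : G, ((c : ℂ) • (1 : Matrix (Fin r) (Fin r) ℂ) * U_R m) ⊗ₖ (U_S m) := by
          have hsum : ∑ h : G, A (h * g) = (c : ℂ) • (1 : Matrix (Fin r) (Fin r) ℂ) := by
            rw [← hres]
            exact Fintype.sum_equiv (Equiv.mulRight g) _ _ (fun h => rfl)
          rw [hsum]
      _ = (c : ℂ) • S := by
          rw [hS, Finset.smul_sum]
          refine Finset.sum_congr rfl fun m _ => ?_
          rw [smul_mul_assoc, one_mul, Matrix.smul_kronecker]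
  have hsc : ((Fintype.card G : ℂ))⁻¹ * ((Fintype.card G : ℂ))⁻¹ * (c : ℂ)
      = (c : ℂ) / (Fintype.card G : ℂ) * (Fintype.card G : ℂ)⁻¹ := by
    field_simp
  rw [smul_mul_assoc, smul_mul_assoc, mul_smul_comm, smul_smul, main, smul_smul, hsc,
    ← smul_smul]
end

section
/- Define the normalized gauge-fixing operators P g := (Real.sqrt ((Fintype.card G) / c) : ℂ) • Q g. Then the family {P g̃ | g̃ ∈ G̃} satisfies the Knill–Laflamme conditions with respect to Π: for all g̃, h̃ ∈ G̃, Π * (P g̃)ᴴ * (P h̃) * Π = (if g̃ = h̃ then (1 : ℂ) else 0) • Π. In other words, the set of gauge-fixing operators associated with a set of group elements having orthonormal orientation states is a correctable error set. -/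
open scoped Kronecker
open Matrix

private lemma aux_vecMulVec_mul {m n p : Type*} [Fintype n] (x : m → ℂ) (a : n → ℂ)
    (M : Matrix n p ℂ) :
    Matrix.vecMulVec x a * M = Matrix.vecMulVec x (Matrix.vecMul a M) := by
  ext i j
  simp [Matrix.mul_apply, Matrix.vecMulVec_apply, Matrix.vecMul, dotProduct,
    Finset.mul_sum, mul_assoc]

private lemma aux_mul_vecMulVec {m n p : Type*} [Fintype n] (M : Matrix m n ℂ)
    (x : n → ℂ) (a : p → ℂ) :
    M * Matrix.vecMulVec x a = Matrix.vecMulVec (M.mulVec x) a := by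
  ext i j
  simp [Matrix.mul_apply, Matrix.vecMulVec_apply, Matrix.mulVec, dotProduct,
    Finset.sum_mul, mul_assoc]

private lemma aux_vecMulVec_mul_vecMulVec {m n p : Type*} [Fintype n]
    (x : m → ℂ) (a : n → ℂ) (y : n → ℂ) (b : p → ℂ) :
    Matrix.vecMulVec x a * Matrix.vecMulVec y b
      = (∑ k, a k * y k) • Matrix.vecMulVec x b := by
  ext i j
  simp only [Matrix.mul_apply, Matrix.vecMulVec_apply, Matrix.smul_apply, smul_eq_mul,
    Finset.sum_mul]
  exact Finset.sum_congr rfl fun k _ => by ring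

private lemma aux_sum_kronecker {ι m n p q : Type*} (t : Finset ι)
    (A : ι → Matrix m n ℂ) (B : Matrix p q ℂ) :
    (∑ i ∈ t, A i) ⊗ₖ B = ∑ i ∈ t, (A i ⊗ₖ B) := by
  ext ⟨i, j⟩ ⟨k, l⟩
  simp [Matrix.kroneckerMap_apply, Matrix.sum_apply, Finset.sum_mul]

/-- **Correctable gauge-fixing operators.**  The normalized gauge-fixing
operators `P g := √(|G|/c) • Q g` associated with a set `Gtil` of group elements whose
orientation states are orthonormal satisfy the Knill–Laflamme conditions with respect
to the gauge projector `Π`. -/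
theorem correctable_gauge_fixing
    {G : Type*} [Group G] [Fintype G] [DecidableEq G] {r s : ℕ}
    (U_R : G → Matrix (Fin r) (Fin r) ℂ)
    (U_S : G → Matrix (Fin s) (Fin s) ℂ)
    (hR_mul : ∀ g h : G, U_R (g * h) = U_R g * U_R h)
    (hR_one : U_R 1 = 1)
    (hR_unitary : ∀ g : G, (U_R g)ᴴ * U_R g = 1)
    (hS_mul : ∀ g h : G, U_S (g * h) = U_S g * U_S h)
    (hS_one : U_S 1 = 1)
    (hS_unitary : ∀ g : G, (U_S g)ᴴ * U_S g = 1)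
    (φ : G → (Fin r → ℂ))
    (hcov : ∀ g h : G, (U_R h).mulVec (φ g) = φ (h * g))
    (c : ℝ) (hc : 0 < c)
    (hres : ∑ g : G, Matrix.vecMulVec (φ g) (star (φ g))
        = (c : ℂ) • (1 : Matrix (Fin r) (Fin r) ℂ))
    (Pg : Matrix (Fin r × Fin s) (Fin r × Fin s) ℂ)
    (hPg : Pg = (Fintype.card G : ℂ)⁻¹ • ∑ g : G, (U_R g) ⊗ₖ (U_S g))
    (Q : G → Matrix (Fin r × Fin s) (Fin r × Fin s) ℂ)
    (hQ : ∀ g : G, Q g = (Matrix.vecMulVec (φ g) (star (φ g))) ⊗ₖ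
        (1 : Matrix (Fin s) (Fin s) ℂ))
    (Gtil : Set G)
    (horth : ∀ gt ∈ Gtil, ∀ ht ∈ Gtil,
      (∑ i : Fin r, star (φ gt i) * φ ht i) = if gt = ht then 1 else 0)
    (P : G → Matrix (Fin r × Fin s) (Fin r × Fin s) ℂ)
    (hP : ∀ g : G, P g = ((Real.sqrt ((Fintype.card G : ℝ) / c) : ℝ) : ℂ) • Q g) :
    ∀ gt ∈ Gtil, ∀ ht ∈ Gtil,
      Pg * (P gt)ᴴ * P ht * Pg = (if gt = ht then (1 : ℂ) else 0) • Pg := by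
  -- notation
  set N : ℂ := (Fintype.card G : ℂ) with hN
  have hNne : N ≠ 0 := by
    simp [hN, Fintype.card_ne_zero]
  have hcne : (c : ℂ) ≠ 0 := by exact_mod_cast hc.ne'
  -- inverses of the unitaries
  have hRinv : ∀ g : G, (U_R g)ᴴ = U_R g⁻¹ := by
    intro g
    have h1 : U_R g * U_R g⁻¹ = 1 := by rw [← hR_mul, mul_inv_cancel, hR_one]
    calc (U_R g)ᴴ = (U_R g)ᴴ * (U_R g * U_R g⁻¹) := by rw [h1, mul_one]
      _ = ((U_R g)ᴴ * U_R g) * U_R g⁻¹ := by rw [mul_assoc]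
      _ = U_R g⁻¹ := by rw [hR_unitary, one_mul]
  -- covariance facts
  have hA : ∀ (m n : G) (a : Fin r → ℂ),
      U_R m * Matrix.vecMulVec (φ n) a = Matrix.vecMulVec (φ (m * n)) a := by
    intro m n a
    rw [aux_mul_vecMulVec, hcov]
  have hB : ∀ (g k : G),
      Matrix.vecMul (star (φ g)) (U_R k) = star (φ (k⁻¹ * g)) := by
    intro g k
    have h := Matrix.star_mulVec ((U_R k)ᴴ) (φ g)
    rw [Matrix.conjTranspose_conjTranspose] at h
    rw [← h, hRinv, hcov]
  -- key identity: Pg * Q g * Pg = (c / N) • Pg for every g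
  have key : ∀ g : G, Pg * Q g * Pg = ((c : ℂ) / N) • Pg := by
    intro g
    set S : Matrix (Fin r × Fin s) (Fin r × Fin s) ℂ := ∑ g : G, (U_R g) ⊗ₖ (U_S g) with hS
    have hSQ : S * Q g * S = (c : ℂ) • S := by
      rw [hQ]
      rw [hS, Finset.sum_mul, Finset.sum_mul]
      have step : ∀ h : G,
          ((U_R h) ⊗ₖ (U_S h)) * (Matrix.vecMulVec (φ g) (star (φ g)) ⊗ₖ 1) * S
            = ∑ k : G, (Matrix.vecMulVec (φ (h * g)) (star (φ (k⁻¹ * g)))) ⊗ₖ U_S (h * k) := by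
        intro h
        rw [← Matrix.mul_kronecker_mul, hA, mul_one, hS, Finset.mul_sum]
        refine Finset.sum_congr rfl fun k _ => ?_
        rw [← Matrix.mul_kronecker_mul, aux_vecMulVec_mul, hB, ← hS_mul]
      calc (∑ h : G, ((U_R h) ⊗ₖ (U_S h)) * (Matrix.vecMulVec (φ g) (star (φ g)) ⊗ₖ 1) * S)
          = ∑ h : G, ∑ k : G,
              (Matrix.vecMulVec (φ (h * g)) (star (φ (k⁻¹ * g)))) ⊗ₖ U_S (h * k) := by
            exact Finset.sum_congr rfl fun h _ => step h
        _ = ∑ k : G, ∑ h : G,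
              (Matrix.vecMulVec (φ (h * g)) (star (φ (k⁻¹ * g)))) ⊗ₖ U_S (h * k) :=
            Finset.sum_comm
        _ = ∑ k : G, ∑ m : G,
              (Matrix.vecMulVec (φ (m * (k⁻¹ * g))) (star (φ (k⁻¹ * g)))) ⊗ₖ U_S m := by
            refine Finset.sum_congr rfl fun k _ => ?_
            refine Fintype.sum_equiv (Equiv.mulRight k) _ _ fun m => ?_
            simp [mul_assoc]
        _ = ∑ m : G, ∑ k : G,
              (Matrix.vecMulVec (φ (m * (k⁻¹ * g))) (star (φ (k⁻¹ * g)))) ⊗ₖ U_S m :=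
            Finset.sum_comm
        _ = ∑ m : G, ∑ n : G,
              (Matrix.vecMulVec (φ (m * n)) (star (φ n))) ⊗ₖ U_S m := by
            refine Finset.sum_congr rfl fun m _ => ?_
            exact Fintype.sum_equiv ((Equiv.inv G).trans (Equiv.mulRight g)) _ _
              fun k => rfl
        _ = ∑ m : G, ((c : ℂ) • U_R m) ⊗ₖ U_S m := by
            refine Finset.sum_congr rfl fun m _ => ?_
            rw [← aux_sum_kronecker]
            have hsum : (∑ n : G, Matrix.vecMulVec (φ (m * n)) (star (φ n)))
                = (c : ℂ) • U_R m := by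
              rw [show (∑ n : G, Matrix.vecMulVec (φ (m * n)) (star (φ n)))
                  = ∑ n : G, U_R m * Matrix.vecMulVec (φ n) (star (φ n)) from
                  Finset.sum_congr rfl fun n _ => (hA m n _).symm,
                ← Finset.mul_sum, hres, Matrix.mul_smul, mul_one]
            rw [hsum]
        _ = (c : ℂ) • S := by
            rw [hS, Finset.smul_sum]
            exact Finset.sum_congr rfl fun m _ => Matrix.smul_kronecker _ _ _
    rw [hPg]
    rw [Matrix.smul_mul, Matrix.smul_mul, Matrix.mul_smul, hSQ]
    rw [smul_smul, smul_smul, smul_smul]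
    congr 1
    field_simp
  -- hermiticity of Q
  have hQherm : ∀ g : G, (Q g)ᴴ = Q g := by
    intro g
    rw [hQ]
    have : (Matrix.vecMulVec (φ g) (star (φ g)) ⊗ₖ (1 : Matrix (Fin s) (Fin s) ℂ))ᴴ
        = (Matrix.vecMulVec (φ g) (star (φ g)))ᴴ ⊗ₖ (1 : Matrix (Fin s) (Fin s) ℂ)ᴴ := by
      ext ⟨i, j⟩ ⟨k, l⟩
      simp only [Matrix.conjTranspose_apply, Matrix.kroneckerMap_apply, star_mul']
    rw [this, Matrix.conjTranspose_one]
    congr 1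
    ext i j
    simp [Matrix.conjTranspose_apply, Matrix.vecMulVec_apply, mul_comm]
  -- main proof
  intro gt hgt ht hht
  set t : ℂ := ((Real.sqrt ((Fintype.card G : ℝ) / c) : ℝ) : ℂ) with htdef
  have htt : t * t = N / (c : ℂ) := by
    rw [htdef, ← Complex.ofReal_mul,
      Real.mul_self_sqrt (by positivity : (0:ℝ) ≤ (Fintype.card G : ℝ) / c)]
    push_cast
    ring
  have hQQ : Q gt * Q ht = (if gt = ht then (1:ℂ) else 0) •
      ((Matrix.vecMulVec (φ gt) (star (φ ht))) ⊗ₖ (1 : Matrix (Fin s) (Fin s) ℂ)) := by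
    rw [hQ, hQ, ← Matrix.mul_kronecker_mul, one_mul,
      aux_vecMulVec_mul_vecMulVec, ← horth gt hgt ht hht]
    rw [Matrix.smul_kronecker]
    rfl
  have hPexp : (P gt)ᴴ * P ht = (t * t) • (Q gt * Q ht) := by
    rw [hP, hP, Matrix.conjTranspose_smul, hQherm]
    rw [Matrix.smul_mul, Matrix.mul_smul, smul_smul]
    congr 1
    simp [htdef, Complex.star_def, Complex.conj_ofReal]
  rcases eq_or_ne gt ht with rfl | hne
  · rw [if_pos rfl, one_smul] at hQQ ⊢
    have : Q gt * Q gt = Q gt := by rw [hQQ, ← hQ]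
    calc Pg * (P gt)ᴴ * P gt * Pg = Pg * ((P gt)ᴴ * P gt) * Pg := by
          rw [mul_assoc Pg]
      _ = (t * t) • (Pg * Q gt * Pg) := by
          rw [hPexp, this, Matrix.mul_smul, Matrix.smul_mul, mul_assoc]
      _ = Pg := by
          rw [key, smul_smul, htt]
          rw [div_mul_div_comm]
          rw [mul_comm N (c:ℂ), div_self (by exact mul_ne_zero hcne hNne), one_smul]
  · rw [if_neg hne] at hQQ ⊢
    rw [zero_smul] at hQQ
    calc Pg * (P gt)ᴴ * P ht * Pg = Pg * ((P gt)ᴴ * P ht) * Pg := by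
          rw [mul_assoc Pg]
      _ = (0:ℂ) • Pg := by
          rw [hPexp, hQQ, smul_zero, Matrix.mul_zero, Matrix.zero_mul, zero_smul]
end

section
/- For any coefficient functions d d' : G → ℂ, define the operators D := ∑ g, d g • Q g and D' := ∑ g, d' g • Q g, which are diagonal in the orthonormal orientation basis. Then Π * Dᴴ * D' * Π = ((Fintype.card G : ℂ)⁻¹ * ∑ g, conj (d g) * d' g) • Π. In particular, any family of operators diagonal in an orthonormal orientation basis satisfies the Knill–Laflamme conditions and hence is a correctable error set. -/
open scoped Kronecker
open Matrix

lemma aux_vmv_mul {n : ℕ} (a b c e : Fin n → ℂ) :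
    Matrix.vecMulVec a b * Matrix.vecMulVec c e
      = (∑ k, b k * c k) • Matrix.vecMulVec a e := by
  ext i j
  simp only [Matrix.mul_apply, Matrix.vecMulVec_apply, Matrix.smul_apply, smul_eq_mul,
    Finset.sum_mul]
  exact Finset.sum_congr rfl fun k _ => by ring

lemma aux_mul_vmv {n : ℕ} (M : Matrix (Fin n) (Fin n) ℂ) (a b : Fin n → ℂ) :
    M * Matrix.vecMulVec a b = Matrix.vecMulVec (M.mulVec a) b := by
  ext i j
  simp only [Matrix.mul_apply, Matrix.vecMulVec_apply, Matrix.mulVec, dotProduct,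
    Finset.sum_mul]
  exact Finset.sum_congr rfl fun k _ => by ring

lemma aux_vmv_mul_mat {n : ℕ} (M : Matrix (Fin n) (Fin n) ℂ) (a b : Fin n → ℂ) :
    Matrix.vecMulVec a b * M = Matrix.vecMulVec a (Matrix.vecMul b M) := by
  ext i j
  simp only [Matrix.mul_apply, Matrix.vecMulVec_apply, Matrix.vecMul, dotProduct,
    Finset.mul_sum]
  exact Finset.sum_congr rfl fun k _ => by ring

lemma aux_kron_conjT {r s : ℕ} (A : Matrix (Fin r) (Fin r) ℂ) (B : Matrix (Fin s) (Fin s) ℂ) :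
    (A ⊗ₖ B)ᴴ = Aᴴ ⊗ₖ Bᴴ := by
  ext ⟨i, k⟩ ⟨j, l⟩
  simp [Matrix.conjTranspose_apply, Matrix.kroneckerMap_apply, star_mul']

lemma aux_sum_kron {G : Type*} [Fintype G] {r s : ℕ} (A : G → Matrix (Fin r) (Fin r) ℂ)
    (B : Matrix (Fin s) (Fin s) ℂ) :
    ∑ g : G, (A g ⊗ₖ B) = (∑ g : G, A g) ⊗ₖ B := by
  ext ⟨i, k⟩ ⟨j, l⟩
  simp [Matrix.kroneckerMap_apply, Matrix.sum_apply, Finset.sum_mul]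

lemma aux_vmv_conjT {n : ℕ} (a b : Fin n → ℂ) :
    (Matrix.vecMulVec a b)ᴴ = Matrix.vecMulVec (star b) (star a) := by
  ext i j
  simp [Matrix.vecMulVec_apply, mul_comm]

/-- For an ideal QRF (orthonormal orientation basis), any operators
`D = ∑ g, d g • Q g` and `D' = ∑ g, d' g • Q g` diagonal in the orientation basis satisfy
`Π * Dᴴ * D' * Π = (|G|⁻¹ * ∑ g, conj (d g) * d' g) • Π`, the Knill–Laflamme conditions. -/
theorem diagonal_in_orientation_basis_correctable
    {G : Type*} [Group G] [Fintype G] [DecidableEq G] {r s : ℕ}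
    (U_R : G → Matrix (Fin r) (Fin r) ℂ)
    (U_S : G → Matrix (Fin s) (Fin s) ℂ)
    (hR_mul : ∀ g h : G, U_R (g * h) = U_R g * U_R h)
    (hR_one : U_R 1 = 1)
    (hR_unitary : ∀ g : G, (U_R g)ᴴ * U_R g = 1)
    (hS_mul : ∀ g h : G, U_S (g * h) = U_S g * U_S h)
    (hS_one : U_S 1 = 1)
    (hS_unitary : ∀ g : G, (U_S g)ᴴ * U_S g = 1)
    (φ : G → (Fin r → ℂ))
    (hcov : ∀ g h : G, (U_R h).mulVec (φ g) = φ (h * g))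
    (horth : ∀ g h : G,
      (∑ i : Fin r, star (φ g i) * φ h i) = if g = h then 1 else 0)
    (hcomplete : ∑ g : G, Matrix.vecMulVec (φ g) (star (φ g))
        = (1 : Matrix (Fin r) (Fin r) ℂ))
    (Pg : Matrix (Fin r × Fin s) (Fin r × Fin s) ℂ)
    (hPg : Pg = (Fintype.card G : ℂ)⁻¹ • ∑ g : G, (U_R g) ⊗ₖ (U_S g))
    (Q : G → Matrix (Fin r × Fin s) (Fin r × Fin s) ℂ)
    (hQ : ∀ g : G, Q g = (Matrix.vecMulVec (φ g) (star (φ g))) ⊗ₖ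
        (1 : Matrix (Fin s) (Fin s) ℂ))
    (d d' : G → ℂ)
    (D D' : Matrix (Fin r × Fin s) (Fin r × Fin s) ℂ)
    (hD : D = ∑ g : G, d g • Q g)
    (hD' : D' = ∑ g : G, d' g • Q g) :
    Pg * Dᴴ * D' * Pg
      = ((Fintype.card G : ℂ)⁻¹ * ∑ g : G, star (d g) * d' g) • Pg := by
  classical
  set V : G → Matrix (Fin r × Fin s) (Fin r × Fin s) ℂ :=
    fun g => (U_R g) ⊗ₖ (U_S g) with hV
  -- inverse facts
  have hRinv : ∀ h : G, (U_R h)ᴴ = U_R h⁻¹ := by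
    intro h
    have h1 : U_R h⁻¹ * U_R h = 1 := by rw [← hR_mul, inv_mul_cancel, hR_one]
    have h2 : U_R h * U_R h⁻¹ = 1 := by rw [← hR_mul, mul_inv_cancel, hR_one]
    calc (U_R h)ᴴ = (U_R h)ᴴ * (U_R h * U_R h⁻¹) := by rw [h2, mul_one]
      _ = ((U_R h)ᴴ * U_R h) * U_R h⁻¹ := by rw [mul_assoc]
      _ = U_R h⁻¹ := by rw [hR_unitary, one_mul]
  -- covariance of the projectors
  have hQherm : ∀ g : G, (Q g)ᴴ = Q g := by
    intro g
    rw [hQ, aux_kron_conjT, aux_vmv_conjT, Matrix.conjTranspose_one, star_star]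
  have hVmul : ∀ g h : G, V (g * h) = V g * V h := by
    intro g h
    simp only [hV, hR_mul, hS_mul, Matrix.mul_kronecker_mul]
  have hVQ : ∀ h g : G, V h * Q g = Q (h * g) * V h := by
    intro h g
    have hvec : Matrix.vecMul (star (φ (h * g))) (U_R h) = star (φ g) := by
      have : Matrix.vecMul (star (φ (h * g))) (U_R h)
          = star ((U_R h)ᴴ.mulVec (φ (h * g))) := by
        ext j
        simp [Matrix.vecMul, Matrix.mulVec, dotProduct, Matrix.conjTranspose_apply,
          mul_comm]
      rw [this, hRinv, hcov, inv_mul_cancel_left]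
    rw [hQ, hQ, hV]
    rw [← Matrix.mul_kronecker_mul, ← Matrix.mul_kronecker_mul, aux_mul_vmv, hcov,
      aux_vmv_mul_mat, hvec, one_mul, mul_one]
  have hVP : ∀ h : G, V h * Pg = Pg := by
    intro h
    rw [hPg, Matrix.mul_smul, Finset.mul_sum]
    congr 1
    exact Fintype.sum_equiv (Equiv.mulLeft h) _ _ (fun k => by
      rw [← hVmul]; rfl)
  have hQsum : (∑ g : G, Q g) = 1 := by
    have : (∑ g : G, Q g)
        = (∑ g : G, Matrix.vecMulVec (φ g) (star (φ g))) ⊗ₖ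
          (1 : Matrix (Fin s) (Fin s) ℂ) := by
      rw [← aux_sum_kron]
      exact Finset.sum_congr rfl fun g _ => hQ g
    rw [this, hcomplete, Matrix.one_kronecker_one]
  have hPQP : ∀ g : G, Pg * Q g * Pg = (Fintype.card G : ℂ)⁻¹ • Pg := by
    intro g
    have h1 : Pg * Q g = (Fintype.card G : ℂ)⁻¹ • ∑ h : G, Q (h * g) * V h := by
      rw [hPg, Matrix.smul_mul, Finset.sum_mul]
      congr 1
      exact Finset.sum_congr rfl fun h _ => hVQ h g
    rw [h1, Matrix.smul_mul, Finset.sum_mul]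
    congr 1
    have : ∀ h : G, Q (h * g) * V h * Pg = Q (h * g) * Pg := by
      intro h; rw [mul_assoc, hVP]
    rw [Finset.sum_congr rfl fun h _ => this h, ← Finset.sum_mul]
    have : (∑ h : G, Q (h * g)) = ∑ h : G, Q h :=
      Fintype.sum_equiv (Equiv.mulRight g) _ _ (fun k => rfl)
    rw [this, hQsum, one_mul]
  -- product of projectors
  have hQQ : ∀ g h : G, Q g * Q h = if g = h then Q g else 0 := by
    intro g h
    rw [hQ, hQ, ← Matrix.mul_kronecker_mul, aux_vmv_mul, one_mul]
    have : (∑ k, star (φ g) k * φ h k) = if g = h then 1 else 0 := by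
      simpa using horth g h
    rw [this]
    by_cases hgh : g = h
    · subst hgh; simp [hQ]
    · simp [hgh]
  -- D† D'
  have hDD : Dᴴ * D' = ∑ g : G, (star (d g) * d' g) • Q g := by
    rw [hD, hD', Matrix.conjTranspose_sum, Finset.sum_mul]
    have : ∀ g : G, (d g • Q g)ᴴ * (∑ h : G, d' h • Q h)
        = (star (d g) * d' g) • Q g := by
      intro g
      rw [Matrix.conjTranspose_smul, hQherm, Finset.mul_sum]
      have h2 : ∀ h : G, star (d g) • Q g * (d' h • Q h)
          = if g = h then (star (d g) * d' g) • Q g else 0 := by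
        intro h
        rw [Matrix.smul_mul, Matrix.mul_smul, hQQ]
        by_cases hgh : g = h
        · subst hgh; simp [smul_smul, mul_comm]
        · simp [hgh]
      rw [Finset.sum_congr rfl fun h _ => h2 h, Finset.sum_ite_eq]
      simp
    exact Finset.sum_congr rfl fun g _ => this g
  -- finish
  calc Pg * Dᴴ * D' * Pg = Pg * (Dᴴ * D') * Pg := by rw [mul_assoc Pg Dᴴ D']
    _ = ∑ g : G, (star (d g) * d' g) • (Pg * Q g * Pg) := by
        rw [hDD, Finset.mul_sum, Finset.sum_mul]
        exact Finset.sum_congr rfl fun g _ => by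
          rw [Matrix.mul_smul, Matrix.smul_mul]
    _ = ∑ g : G, (star (d g) * d' g) • ((Fintype.card G : ℂ)⁻¹ • Pg) := by
        exact Finset.sum_congr rfl fun g _ => by rw [hPQP g]
    _ = ((Fintype.card G : ℂ)⁻¹ * ∑ g : G, star (d g) * d' g) • Pg := by
        simp only [smul_smul]
        rw [← Finset.sum_smul, ← Finset.sum_mul, mul_comm]
end

section
/- For every character χ : G →* ℂˣ, the operator A_χ := ∑ g, conj (χ g) • Q g is unitary: (A_χ)ᴴ * A_χ = 1 and A_χ * (A_χ)ᴴ = 1 as matrices of size (Fin r × Fin s). -/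
open scoped Kronecker
open Matrix

/-!
The rank-one projectors `|φ g⟩⟨φ g|` of an orthonormal basis form a complete family of mutually
orthogonal self-adjoint idempotents, so `∑ g, c g • |φ g⟩⟨φ g|` is unitary as soon as every
coefficient `c g` is; the values of a character of a finite group are roots of unity, hence of
modulus one. Finally `Q g = |φ g⟩⟨φ g| ⊗ₖ 1` makes `A_χ` the Kronecker product of such a unitary
with the identity.
-/

section OrthogonalIdempotents

variable {ι R A : Type*} [Fintype ι] [DecidableEq ι] [CommSemiring R] [Semiring A] [Algebra R A]

theorem sum_smul_mul_sum_smul_of_mul_eq_ite {P : ι → A}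
    (hP : ∀ i j, P i * P j = if i = j then P i else 0) (c d : ι → R) :
    (∑ i, c i • P i) * (∑ i, d i • P i) = ∑ i, (c i * d i) • P i := by
  simp_rw [Finset.sum_mul_sum, smul_mul_smul_comm, hP, smul_ite, smul_zero, Finset.sum_ite_eq,
    Finset.mem_univ, if_true]

theorem sum_smul_mem_unitary_of_mul_eq_ite [StarRing R] [StarRing A] [StarModule R A]
    {P : ι → A} (hP_sa : ∀ i, IsSelfAdjoint (P i))
    (hP : ∀ i j, P i * P j = if i = j then P i else 0) (hP_sum : ∑ i, P i = 1)
    {c : ι → R} (hc : ∀ i, c i ∈ unitary R) :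
    ∑ i, c i • P i ∈ unitary A := by
  have hstar : star (∑ i, c i • P i) = ∑ i, star (c i) • P i := by
    simp_rw [star_sum, star_smul, (hP_sa _).star_eq]
  rw [Unitary.mem_iff, hstar, sum_smul_mul_sum_smul_of_mul_eq_ite hP,
    sum_smul_mul_sum_smul_of_mul_eq_ite hP]
  simp_rw [Unitary.star_mul_self_of_mem (hc _), Unitary.mul_star_self_of_mem (hc _), one_smul,
    hP_sum, and_self]

end OrthogonalIdempotents

namespace Matrix

theorem sum_kronecker {ι l m n p α : Type*} [Fintype ι] [NonUnitalNonAssocSemiring α]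
    (M : ι → Matrix l m α) (B : Matrix n p α) :
    (∑ i, M i) ⊗ₖ B = ∑ i, M i ⊗ₖ B := by
  ext ⟨i, k⟩ ⟨j, l⟩
  simp only [kronecker_apply, sum_apply, Finset.sum_mul]

variable {n α : Type*} [CommSemiring α] [StarRing α]

theorem isSelfAdjoint_vecMulVec_star (v : n → α) : IsSelfAdjoint (vecMulVec v (star v)) := by
  rw [IsSelfAdjoint, star_eq_conjTranspose, conjTranspose_vecMulVec, star_star]

theorem vecMulVec_star_mul_vecMulVec_star_of_orthonormal {ι : Type*} [DecidableEq ι] [Fintype n]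
    {φ : ι → n → α} (hφ : ∀ i j, star (φ i) ⬝ᵥ φ j = if i = j then 1 else 0) (i j : ι) :
    vecMulVec (φ i) (star (φ i)) * vecMulVec (φ j) (star (φ j)) =
      if i = j then vecMulVec (φ i) (star (φ i)) else 0 := by
  rw [vecMulVec_mul_vecMulVec, hφ]
  split_ifs with hij
  · rw [hij, one_smul]
  · rw [zero_smul, vecMulVec_zero]

end Matrix

theorem MonoidHom.coe_apply_mem_unitary {G : Type*} [Group G] [Finite G] (χ : G →* ℂˣ) (g : G) :
    (χ g : ℂ) ∈ unitary ℂ := by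
  have hpow : (χ g : ℂ) ^ Nat.card G = 1 := by
    rw [← Units.val_pow_eq_pow_val, ← map_pow, pow_card_eq_one', map_one, Units.val_one]
  rw [Unitary.mem_iff_star_mul_self, RCLike.star_def, RCLike.conj_mul,
    Complex.norm_eq_one_of_pow_eq_one hpow Nat.card_pos.ne']
  norm_num

theorem A_chi_unitary_general
    {G : Type*} [CommGroup G] [Fintype G] [DecidableEq G] {r s : ℕ}
    (φ : G → (Fin r → ℂ))
    (horth : ∀ g h : G,
      (∑ i : Fin r, star (φ g i) * φ h i) = if g = h then 1 else 0)
    (hcomplete : ∑ g : G, Matrix.vecMulVec (φ g) (star (φ g))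
        = (1 : Matrix (Fin r) (Fin r) ℂ))
    (Q : G → Matrix (Fin r × Fin s) (Fin r × Fin s) ℂ)
    (hQ : ∀ g : G, Q g = (Matrix.vecMulVec (φ g) (star (φ g))) ⊗ₖ
        (1 : Matrix (Fin s) (Fin s) ℂ))
    (χ : G →* ℂˣ)
    (A : Matrix (Fin r × Fin s) (Fin r × Fin s) ℂ)
    (hA : A = ∑ g : G, star ((χ g : ℂ)) • Q g) :
    Aᴴ * A = 1 ∧ A * Aᴴ = 1 := by
  have hA_kron : A = (∑ g, star (χ g : ℂ) • vecMulVec (φ g) (star (φ g))) ⊗ₖ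
      (1 : Matrix (Fin s) (Fin s) ℂ) := by
    simp_rw [hA, hQ, sum_kronecker, smul_kronecker]
  have hunitary : A ∈ unitary _ := by
    rw [hA_kron]
    refine kronecker_mem_unitary ?_ (one_mem _)
    exact sum_smul_mem_unitary_of_mul_eq_ite (fun g => isSelfAdjoint_vecMulVec_star (φ g))
      (vecMulVec_star_mul_vecMulVec_star_of_orthonormal horth) hcomplete
      (fun g => Unitary.star_mem (χ.coe_apply_mem_unitary g))
  simpa only [Unitary.mem_iff, star_eq_conjTranspose] using hunitary

/-- For a finite commutative gauge group `G` with an ideal QRF, the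
operator `A_χ := ∑ g, conj (χ g) • Q g` associated with a character `χ : G →* ℂˣ`
is unitary: `(A_χ)ᴴ * A_χ = 1` and `A_χ * (A_χ)ᴴ = 1`. -/
theorem A_chi_unitary
    {G : Type*} [CommGroup G] [Fintype G] [DecidableEq G] {r s : ℕ}
    (U_R : G → Matrix (Fin r) (Fin r) ℂ)
    (U_S : G → Matrix (Fin s) (Fin s) ℂ)
    (hR_mul : ∀ g h : G, U_R (g * h) = U_R g * U_R h)
    (hR_one : U_R 1 = 1)
    (hR_unitary : ∀ g : G, (U_R g)ᴴ * U_R g = 1)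
    (hS_mul : ∀ g h : G, U_S (g * h) = U_S g * U_S h)
    (hS_one : U_S 1 = 1)
    (hS_unitary : ∀ g : G, (U_S g)ᴴ * U_S g = 1)
    (φ : G → (Fin r → ℂ))
    (hcov : ∀ g h : G, (U_R h).mulVec (φ g) = φ (h * g))
    (horth : ∀ g h : G,
      (∑ i : Fin r, star (φ g i) * φ h i) = if g = h then 1 else 0)
    (hcomplete : ∑ g : G, Matrix.vecMulVec (φ g) (star (φ g))
        = (1 : Matrix (Fin r) (Fin r) ℂ))
    (Q : G → Matrix (Fin r × Fin s) (Fin r × Fin s) ℂ)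
    (hQ : ∀ g : G, Q g = (Matrix.vecMulVec (φ g) (star (φ g))) ⊗ₖ
        (1 : Matrix (Fin s) (Fin s) ℂ))
    (χ : G →* ℂˣ)
    (A : Matrix (Fin r × Fin s) (Fin r × Fin s) ℂ)
    (hA : A = ∑ g : G, star ((χ g : ℂ)) • Q g) :
    Aᴴ * A = 1 ∧ A * Aᴴ = 1 :=
  A_chi_unitary_general φ horth hcomplete Q hQ χ A hA
end

section
/- For every character χ : G →* ℂˣ, with A_χ := ∑ g, conj (χ g) • Q g and the charge-sector (isotype) projector Π_χ := (Fintype.card G : ℂ)⁻¹ • ∑ g, conj (χ g) • ((U_R g) ⊗ₖ (U_S g)), one has Π_χ * A_χ * Π = A_χ * Π. That is, A_χ maps the gauge-invariant (physical) subspace into the charge sector labelled by χ. -/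
open scoped Kronecker
open Matrix

lemma mul_vecMulVec' {n : ℕ} (M : Matrix (Fin n) (Fin n) ℂ) (x y : Fin n → ℂ) :
    M * Matrix.vecMulVec x y = Matrix.vecMulVec (M.mulVec x) y := by
  ext i j
  simp [Matrix.mul_apply, Matrix.vecMulVec_apply, Matrix.mulVec, dotProduct,
    Finset.sum_mul, mul_assoc]

lemma vecMulVec_mul' {n : ℕ} (M : Matrix (Fin n) (Fin n) ℂ) (x y : Fin n → ℂ) :
    Matrix.vecMulVec x y * M = Matrix.vecMulVec x (Matrix.vecMul y M) := by
  ext i j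
  simp [Matrix.mul_apply, Matrix.vecMulVec_apply, Matrix.vecMul, dotProduct,
    Finset.mul_sum, mul_assoc]

/-- With the charge-sector (isotype) projector
`Π_χ := |G|⁻¹ • ∑ g, conj (χ g) • (U_R g ⊗ₖ U_S g)`, the operator
`A_χ := ∑ g, conj (χ g) • Q g` maps the gauge-invariant subspace into the charge sector
labelled by `χ`:  `Π_χ * A_χ * Π = A_χ * Π`. -/
theorem A_chi_maps_into_charge_sector
    {G : Type*} [CommGroup G] [Fintype G] [DecidableEq G] {r s : ℕ}
    (U_R : G → Matrix (Fin r) (Fin r) ℂ)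
    (U_S : G → Matrix (Fin s) (Fin s) ℂ)
    (hR_mul : ∀ g h : G, U_R (g * h) = U_R g * U_R h)
    (hR_one : U_R 1 = 1)
    (hR_unitary : ∀ g : G, (U_R g)ᴴ * U_R g = 1)
    (hS_mul : ∀ g h : G, U_S (g * h) = U_S g * U_S h)
    (hS_one : U_S 1 = 1)
    (hS_unitary : ∀ g : G, (U_S g)ᴴ * U_S g = 1)
    (φ : G → (Fin r → ℂ))
    (hcov : ∀ g h : G, (U_R h).mulVec (φ g) = φ (h * g))
    (horth : ∀ g h : G,
      (∑ i : Fin r, star (φ g i) * φ h i) = if g = h then 1 else 0)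
    (hcomplete : ∑ g : G, Matrix.vecMulVec (φ g) (star (φ g))
        = (1 : Matrix (Fin r) (Fin r) ℂ))
    (Pg : Matrix (Fin r × Fin s) (Fin r × Fin s) ℂ)
    (hPg : Pg = (Fintype.card G : ℂ)⁻¹ • ∑ g : G, (U_R g) ⊗ₖ (U_S g))
    (Q : G → Matrix (Fin r × Fin s) (Fin r × Fin s) ℂ)
    (hQ : ∀ g : G, Q g = (Matrix.vecMulVec (φ g) (star (φ g))) ⊗ₖ
        (1 : Matrix (Fin s) (Fin s) ℂ))
    (χ : G →* ℂˣ)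
    (A : Matrix (Fin r × Fin s) (Fin r × Fin s) ℂ)
    (hA : A = ∑ g : G, star ((χ g : ℂ)) • Q g)
    (Pχ : Matrix (Fin r × Fin s) (Fin r × Fin s) ℂ)
    (hPχ : Pχ = (Fintype.card G : ℂ)⁻¹ •
        ∑ g : G, star ((χ g : ℂ)) • ((U_R g) ⊗ₖ (U_S g))) :
    Pχ * A * Pg = A * Pg := by
  set V : G → Matrix (Fin r × Fin s) (Fin r × Fin s) ℂ :=
    fun g => (U_R g) ⊗ₖ (U_S g) with hV
  -- inverse of U_R
  have hR_inv : ∀ h : G, (U_R h)ᴴ = U_R h⁻¹ := by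
    intro h
    have h1 : U_R h * U_R h⁻¹ = 1 := by rw [← hR_mul, mul_inv_cancel, hR_one]
    calc (U_R h)ᴴ = (U_R h)ᴴ * (U_R h * U_R h⁻¹) := by rw [h1, mul_one]
      _ = ((U_R h)ᴴ * U_R h) * U_R h⁻¹ := by rw [mul_assoc]
      _ = U_R h⁻¹ := by rw [hR_unitary, one_mul]
  -- V is multiplicative
  have hVmul : ∀ g h : G, V (g * h) = V g * V h := by
    intro g h
    simp only [hV, hR_mul, hS_mul, Matrix.mul_kronecker_mul]
  -- V h * Pg = Pg
  have hVPg : ∀ h : G, V h * Pg = Pg := by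
    intro h
    rw [hPg, Matrix.mul_smul, Finset.mul_sum]
    congr 1
    have := Equiv.sum_comp (Equiv.mulLeft h) (fun g => V g)
    simp only [Equiv.coe_mulLeft] at this
    calc ∑ g : G, V h * V g = ∑ g : G, V (h * g) := by
          simp_rw [hVmul]
      _ = ∑ g : G, V g := this
  -- commutation relation
  have hcomm : ∀ h g : G, V h * Q g = Q (h * g) * V h := by
    intro h g
    rw [hQ, hQ, hV]
    rw [← Matrix.mul_kronecker_mul, ← Matrix.mul_kronecker_mul, one_mul, mul_one]
    congr 1
    rw [mul_vecMulVec', vecMulVec_mul', hcov]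
    congr 1
    have : Matrix.vecMul (star (φ (h * g))) (U_R h)
        = star ((U_R h)ᴴ.mulVec (φ (h * g))) := by
      ext i
      simp [Matrix.vecMul, Matrix.mulVec, dotProduct, Matrix.conjTranspose_apply,
        mul_comm]
    rw [this, hR_inv, hcov]
    simp [inv_mul_cancel_left]
  -- key
  have key : ∀ h g : G, V h * (Q g * Pg) = Q (h * g) * Pg := by
    intro h g
    rw [← mul_assoc, hcomm, mul_assoc, hVPg]
  have hs : ∀ h g : G, star ((χ (h * g) : ℂ)) = star ((χ h : ℂ)) * star ((χ g : ℂ)) := by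
    intro h g
    rw [_root_.map_mul, Units.val_mul, star_mul']
  have hAPg : A * Pg = ∑ g : G, star ((χ g : ℂ)) • (Q g * Pg) := by
    rw [hA, Finset.sum_mul]
    simp [Matrix.smul_mul]
  have step : ∀ h : G, star ((χ h : ℂ)) • (V h * (A * Pg)) = A * Pg := by
    intro h
    rw [hAPg, Finset.mul_sum, Finset.smul_sum]
    calc ∑ g : G, star ((χ h : ℂ)) • (V h * (star ((χ g : ℂ)) • (Q g * Pg)))
        = ∑ g : G, star ((χ (h * g) : ℂ)) • (Q (h * g) * Pg) := by
          refine Finset.sum_congr rfl fun g _ => ?_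
          rw [Matrix.mul_smul, smul_smul, key, hs]
      _ = ∑ g : G, star ((χ g : ℂ)) • (Q g * Pg) := by
          have := Equiv.sum_comp (Equiv.mulLeft h)
            (fun g => star ((χ g : ℂ)) • (Q g * Pg))
          simpa using this
  rw [mul_assoc, hPχ, Matrix.smul_mul, Finset.sum_mul]
  have hsum : ∑ h : G, (star ((χ h : ℂ)) • V h) * (A * Pg)
      = ∑ _h : G, A * Pg := by
    refine Finset.sum_congr rfl fun h _ => ?_
    rw [Matrix.smul_mul]
    exact step h
  rw [hsum, Finset.sum_const, Finset.card_univ, ← Nat.cast_smul_eq_nsmul ℂ, smul_smul,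
    inv_mul_cancel₀ (Nat.cast_ne_zero.mpr Fintype.card_ne_zero), one_smul]
end

section
/- The family {A_χ} indexed by the characters of G, where A_χ := ∑ g, conj (χ g) • Q g, satisfies the Knill–Laflamme conditions with respect to Π: for all characters χ, χ' : G →* ℂˣ, Π * (A_χ)ᴴ * A_{χ'} * Π = (if χ = χ' then (1 : ℂ) else 0) • Π. Hence {A_χ} is a correctable error set. -/
open scoped Kronecker
open Matrix

/-!
Conjugation by `U_R h ⊗ₖ U_S h` carries `Q g` to `Q (h * g)` (covariance), while the group
average `Π` absorbs `U_R h ⊗ₖ U_S h` on either side. Hence `Π * Q g * Π` does not depend on `g`, and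
summing over the resolution of the identity `∑ g, Q g = 1` gives `Π * Q g * Π = |G|⁻¹ • Π`.
Since the `Q g` are mutually orthogonal projectors, `(A χ)ᴴ * A χ' = ∑ g, χ g * conj (χ' g) • Q g`,
so `Π * (A χ)ᴴ * A χ' * Π` is `|G|⁻¹` times the inner product of the two characters, which is
`δ χ χ'` by orthogonality of characters.
-/

section Characters

variable {G : Type*} [Group G] [Fintype G]

theorem star_coe_monoidHom_units (χ : G →* ℂˣ) (g : G) :
    star (χ g : ℂ) = ((χ g)⁻¹ : ℂˣ) := by
  have hpow : (χ g : ℂ) ^ Fintype.card G = 1 := by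
    rw [← Units.val_pow_eq_pow_val, ← map_pow, pow_card_eq_one, map_one, Units.val_one]
  have hnorm : ‖(χ g : ℂ)‖ = 1 := Complex.norm_eq_one_of_pow_eq_one hpow Fintype.card_ne_zero
  rw [Units.val_inv_eq_inv_val, RCLike.inv_eq_conj hnorm]
  rfl

theorem sum_monoidHom_units_mul_star [DecidableEq (G →* ℂˣ)] (χ χ' : G →* ℂˣ) :
    ∑ g, (χ g : ℂ) * star (χ' g : ℂ) = if χ = χ' then (Fintype.card G : ℂ) else 0 := by
  have hterm (g : G) :
      (χ g : ℂ) * star (χ' g : ℂ) = (Units.coeHom ℂ).comp (χ * χ'⁻¹) g := by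
    simp [star_coe_monoidHom_units]
  have htrivial : (Units.coeHom ℂ).comp (χ * χ'⁻¹) = 1 ↔ χ = χ' := by
    rw [← mul_inv_eq_one (a := χ),
      ← MonoidHom.cancel_left (g := Units.coeHom ℂ) Units.val_injective, MonoidHom.comp_one]
  classical
  simp only [hterm, sum_hom_units, htrivial, Nat.cast_ite, Nat.cast_zero]

end Characters

section GroupAverage

variable {G : Type*} [Group G] [Fintype G] {n : Type*} [Fintype n] [DecidableEq n]

noncomputable def groupAverage (W : G → Matrix n n ℂ) : Matrix n n ℂ :=
  (Fintype.card G : ℂ)⁻¹ • ∑ g, W g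

variable {W : G → Matrix n n ℂ} (hW : ∀ g h, W (g * h) = W g * W h)
include hW

theorem groupAverage_mul (h : G) : groupAverage W * W h = groupAverage W := by
  rw [groupAverage, smul_mul_assoc, Finset.sum_mul]
  simp only [← hW]
  exact congrArg _ (Equiv.sum_comp (Equiv.mulRight h) W)

theorem mul_groupAverage (h : G) : W h * groupAverage W = groupAverage W := by
  rw [groupAverage, mul_smul_comm, Finset.mul_sum]
  simp only [← hW]
  exact congrArg _ (Equiv.sum_comp (Equiv.mulLeft h) W)

theorem conjTranspose_mul_groupAverage {h : G} (hU : W h ∈ unitary (Matrix n n ℂ)) :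
    (W h)ᴴ * groupAverage W = groupAverage W := by
  conv_lhs => rw [← mul_groupAverage hW h, ← Matrix.mul_assoc, ← star_eq_conjTranspose,
    Unitary.star_mul_self_of_mem hU, Matrix.one_mul]

theorem groupAverage_mul_self : groupAverage W * groupAverage W = groupAverage W := by
  nth_rewrite 2 [groupAverage]
  rw [mul_smul_comm, Finset.mul_sum, Finset.sum_congr rfl fun h _ => groupAverage_mul hW h,
    Finset.sum_const, Finset.card_univ, ← Nat.cast_smul_eq_nsmul ℂ, smul_smul,
    inv_mul_cancel₀ (by simp), one_smul]

theorem groupAverage_mul_mul_groupAverage (hU : ∀ g, W g ∈ unitary (Matrix n n ℂ))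
    {Q : G → Matrix n n ℂ} (hQ : ∀ h g, W h * Q g * (W h)ᴴ = Q (h * g))
    (hQ_sum : ∑ g, Q g = 1) (g : G) :
    groupAverage W * Q g * groupAverage W = (Fintype.card G : ℂ)⁻¹ • groupAverage W := by
  set P := groupAverage W
  have hconst (g : G) : P * Q g * P = P * Q 1 * P := by
    conv_lhs => rw [← mul_one g, ← hQ]
    simp only [Matrix.mul_assoc]
    rw [conjTranspose_mul_groupAverage hW (hU g), ← Matrix.mul_assoc P, groupAverage_mul hW]
  have hsum : (Fintype.card G : ℂ) • (P * Q 1 * P) = P := by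
    calc (Fintype.card G : ℂ) • (P * Q 1 * P) = ∑ g, P * Q g * P := by
          simp only [hconst, Finset.sum_const, Finset.card_univ, Nat.cast_smul_eq_nsmul]
      _ = P := by rw [← Finset.sum_mul, ← Finset.mul_sum, hQ_sum, Matrix.mul_one,
            groupAverage_mul_self hW]
  conv_rhs => rw [← hsum, smul_smul, inv_mul_cancel₀ (by simp), one_smul]
  exact hconst g

theorem groupAverage_mul_sum_smul_mul_groupAverage (hU : ∀ g, W g ∈ unitary (Matrix n n ℂ))
    {Q : G → Matrix n n ℂ} (hQ : ∀ h g, W h * Q g * (W h)ᴴ = Q (h * g))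
    (hQ_sum : ∑ g, Q g = 1) (c : G → ℂ) :
    groupAverage W * (∑ g, c g • Q g) * groupAverage W =
      ((∑ g, c g) / Fintype.card G) • groupAverage W := by
  simp only [Finset.mul_sum, Finset.sum_mul, mul_smul_comm, smul_mul_assoc,
    groupAverage_mul_mul_groupAverage hW hU hQ hQ_sum, smul_smul, ← Finset.sum_smul,
    div_eq_mul_inv]

end GroupAverage

theorem conjTranspose_sum_smul_mul_sum_smul {ι n : Type*} [Fintype ι] [DecidableEq ι]
    [Fintype n]
    {Q : ι → Matrix n n ℂ} (hQ_herm : ∀ i, (Q i)ᴴ = Q i)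
    (hQ_orth : ∀ i j, Q i * Q j = if i = j then Q i else 0) (a b : ι → ℂ) :
    (∑ i, a i • Q i)ᴴ * ∑ i, b i • Q i = ∑ i, (star (a i) * b i) • Q i := by
  simp only [conjTranspose_sum, conjTranspose_smul, hQ_herm, Finset.sum_mul_sum, smul_mul_smul,
    hQ_orth, smul_ite, smul_zero, Finset.sum_ite_eq, Finset.mem_univ, if_true]

section RankOneKronecker

variable {ι m n : Type*} [DecidableEq n]

theorem conjTranspose_vecMulVec_star_kronecker_one (x : m → ℂ) :
    (vecMulVec x (star x) ⊗ₖ (1 : Matrix n n ℂ))ᴴ = vecMulVec x (star x) ⊗ₖ 1 := by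
  rw [conjTranspose_kronecker, conjTranspose_vecMulVec, star_star, conjTranspose_one]

theorem vecMulVec_star_kronecker_one_mul_of_orthonormal [Fintype m] [Fintype n] [DecidableEq ι]
    {φ : ι → m → ℂ}
    (horth : ∀ i j, star (φ i) ⬝ᵥ φ j = if i = j then 1 else 0) (i j : ι) :
    (vecMulVec (φ i) (star (φ i)) ⊗ₖ (1 : Matrix n n ℂ)) * (vecMulVec (φ j) (star (φ j)) ⊗ₖ 1) =
      if i = j then vecMulVec (φ i) (star (φ i)) ⊗ₖ 1 else 0 := by
  rw [← mul_kronecker_mul, Matrix.one_mul, vecMulVec_mul_vecMulVec, horth]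
  split_ifs with hij
  · rw [one_smul, hij]
  · rw [zero_smul, vecMulVec_zero, zero_kronecker]

theorem sum_vecMulVec_star_kronecker_one [Fintype ι] [DecidableEq m] {φ : ι → m → ℂ}
    (hcomplete : ∑ i, vecMulVec (φ i) (star (φ i)) = 1) :
    ∑ i, vecMulVec (φ i) (star (φ i)) ⊗ₖ (1 : Matrix n n ℂ) = 1 := by
  rw [← one_kronecker_one, ← hcomplete]
  exact (map_sum ((kroneckerBilinear (R := ℂ) (α := ℂ)).flip (1 : Matrix n n ℂ)) _ _).symm

theorem kronecker_mul_vecMulVec_star_kronecker_one_mul_conjTranspose [Fintype m] [Fintype n]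
    (U : Matrix m m ℂ) {V : Matrix n n ℂ} (hV : V ∈ unitary (Matrix n n ℂ)) (x : m → ℂ) :
    (U ⊗ₖ V) * (vecMulVec x (star x) ⊗ₖ 1) * (U ⊗ₖ V)ᴴ =
      vecMulVec (U *ᵥ x) (star (U *ᵥ x)) ⊗ₖ 1 := by
  rw [conjTranspose_kronecker, ← mul_kronecker_mul, ← mul_kronecker_mul, mul_vecMulVec,
    vecMulVec_mul, ← star_mulVec, Matrix.mul_one, ← star_eq_conjTranspose,
    Unitary.mul_star_self_of_mem hV]

end RankOneKronecker

theorem A_chi_family_correctable_general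
    {G : Type*} [CommGroup G] [Fintype G] [DecidableEq G]
    [DecidableEq (G →* ℂˣ)] {r s : ℕ}
    (U_R : G → Matrix (Fin r) (Fin r) ℂ)
    (U_S : G → Matrix (Fin s) (Fin s) ℂ)
    (hR_mul : ∀ g h : G, U_R (g * h) = U_R g * U_R h)
    (hR_unitary : ∀ g : G, (U_R g)ᴴ * U_R g = 1)
    (hS_mul : ∀ g h : G, U_S (g * h) = U_S g * U_S h)
    (hS_unitary : ∀ g : G, (U_S g)ᴴ * U_S g = 1)
    (φ : G → (Fin r → ℂ))
    (hcov : ∀ g h : G, (U_R h).mulVec (φ g) = φ (h * g))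
    (horth : ∀ g h : G,
      (∑ i : Fin r, star (φ g i) * φ h i) = if g = h then 1 else 0)
    (hcomplete : ∑ g : G, Matrix.vecMulVec (φ g) (star (φ g))
        = (1 : Matrix (Fin r) (Fin r) ℂ))
    (Pg : Matrix (Fin r × Fin s) (Fin r × Fin s) ℂ)
    (hPg : Pg = (Fintype.card G : ℂ)⁻¹ • ∑ g : G, (U_R g) ⊗ₖ (U_S g))
    (Q : G → Matrix (Fin r × Fin s) (Fin r × Fin s) ℂ)
    (hQ : ∀ g : G, Q g = (Matrix.vecMulVec (φ g) (star (φ g))) ⊗ₖ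
        (1 : Matrix (Fin s) (Fin s) ℂ))
    (A : (G →* ℂˣ) → Matrix (Fin r × Fin s) (Fin r × Fin s) ℂ)
    (hA : ∀ χ : G →* ℂˣ, A χ = ∑ g : G, star ((χ g : ℂ)) • Q g) :
    ∀ χ χ' : G →* ℂˣ,
      Pg * (A χ)ᴴ * A χ' * Pg = (if χ = χ' then (1 : ℂ) else 0) • Pg := by
  intro χ χ'
  obtain rfl : Pg = groupAverage fun g => U_R g ⊗ₖ U_S g := hPg
  obtain rfl : Q = fun g => vecMulVec (φ g) (star (φ g)) ⊗ₖ (1 : Matrix (Fin s) (Fin s) ℂ) :=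
    funext hQ
  have hR (g : G) : U_R g ∈ unitary _ := mem_unitaryGroup_iff'.mpr (hR_unitary g)
  have hS (g : G) : U_S g ∈ unitary _ := mem_unitaryGroup_iff'.mpr (hS_unitary g)
  have htwirl := groupAverage_mul_sum_smul_mul_groupAverage
    (fun g h => by simp only [hR_mul, hS_mul, mul_kronecker_mul])
    (fun g => kronecker_mem_unitary (hR g) (hS g))
    (fun h g => by
      rw [kronecker_mul_vecMulVec_star_kronecker_one_mul_conjTranspose _ (hS h), hcov])
    (sum_vecMulVec_star_kronecker_one hcomplete)
  rw [Matrix.mul_assoc _ (A χ)ᴴ, hA, hA, conjTranspose_sum_smul_mul_sum_smul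
    (fun g => conjTranspose_vecMulVec_star_kronecker_one _)
    (vecMulVec_star_kronecker_one_mul_of_orthonormal horth)]
  simp only [star_star, htwirl, sum_monoidHom_units_mul_star]
  split_ifs <;> simp

/-- The family `{A_χ}` indexed by the characters of `G`,
`A_χ := ∑ g, conj (χ g) • Q g`, satisfies the Knill–Laflamme conditions with respect to
the gauge projector `Π`: `Π * (A_χ)ᴴ * A_χ' * Π = (if χ = χ' then 1 else 0) • Π`. -/
theorem A_chi_family_correctable
    {G : Type*} [CommGroup G] [Fintype G] [DecidableEq G]
    [DecidableEq (G →* ℂˣ)] {r s : ℕ}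
    (U_R : G → Matrix (Fin r) (Fin r) ℂ)
    (U_S : G → Matrix (Fin s) (Fin s) ℂ)
    (hR_mul : ∀ g h : G, U_R (g * h) = U_R g * U_R h)
    (hR_one : U_R 1 = 1)
    (hR_unitary : ∀ g : G, (U_R g)ᴴ * U_R g = 1)
    (hS_mul : ∀ g h : G, U_S (g * h) = U_S g * U_S h)
    (hS_one : U_S 1 = 1)
    (hS_unitary : ∀ g : G, (U_S g)ᴴ * U_S g = 1)
    (φ : G → (Fin r → ℂ))
    (hcov : ∀ g h : G, (U_R h).mulVec (φ g) = φ (h * g))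
    (horth : ∀ g h : G,
      (∑ i : Fin r, star (φ g i) * φ h i) = if g = h then 1 else 0)
    (hcomplete : ∑ g : G, Matrix.vecMulVec (φ g) (star (φ g))
        = (1 : Matrix (Fin r) (Fin r) ℂ))
    (Pg : Matrix (Fin r × Fin s) (Fin r × Fin s) ℂ)
    (hPg : Pg = (Fintype.card G : ℂ)⁻¹ • ∑ g : G, (U_R g) ⊗ₖ (U_S g))
    (Q : G → Matrix (Fin r × Fin s) (Fin r × Fin s) ℂ)
    (hQ : ∀ g : G, Q g = (Matrix.vecMulVec (φ g) (star (φ g))) ⊗ₖ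
        (1 : Matrix (Fin s) (Fin s) ℂ))
    (A : (G →* ℂˣ) → Matrix (Fin r × Fin s) (Fin r × Fin s) ℂ)
    (hA : ∀ χ : G →* ℂˣ, A χ = ∑ g : G, star ((χ g : ℂ)) • Q g) :
    ∀ χ χ' : G →* ℂˣ,
      Pg * (A χ)ᴴ * A χ' * Pg = (if χ = χ' then (1 : ℂ) else 0) • Pg :=
  A_chi_family_correctable_general U_R U_S hR_mul hR_unitary hS_mul hS_unitary φ hcov horth
    hcomplete Pg hPg Q hQ A hA
end

section
/- Let H be a subgroup of G whose orientation states form an orthonormal basis of the frame space, and for a character ψ : H →* ℂˣ set A_ψ := ∑_{h ∈ H} conj (ψ h) • Q h and the coarse-grained sector projector Π_ψ := (Nat.card H : ℂ)⁻¹ • ∑_{h ∈ H} conj (ψ h) • ((U_R h) ⊗ₖ (U_S h)). Then Π_ψ * A_ψ * Π = A_ψ * Π; that is, A_ψ maps the G-invariant (physical) subspace into the H-isotype (coarse-grained charge sector) labelled by ψ. -/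
open scoped Kronecker
open Matrix

/-!
Since `U_R k |φ g⟩⟨φ g| (U_R k)ᴴ = |φ (k g)⟩⟨φ (k g)|` and `Π` absorbs every `U_R k ⊗ U_S k`,
we get `(U_R k ⊗ U_S k) Q h Π = Q (k h) Π`. Reindexing the sum defining `A_ψ` then shows that every
`U_R k ⊗ U_S k` with `k ∈ H` acts on `A_ψ Π` as the scalar `ψ k`, so averaging against
`conj ∘ ψ` reproduces `A_ψ Π`.
-/

theorem star_mul_self_apply_eq_one {H : Type*} [Group H] [Finite H] (ψ : H →* ℂˣ) (k : H) :
    star (ψ k : ℂ) * ψ k = 1 := by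
  have hpow : (ψ k : ℂ) ^ Nat.card H = 1 := by
    rw [← Units.val_pow_eq_pow_val, ← map_pow, pow_card_eq_one', map_one, Units.val_one]
  rw [Complex.star_def, Complex.conj_mul',
    Complex.norm_eq_one_of_pow_eq_one hpow Nat.card_pos.ne', Complex.ofReal_one, one_pow]

theorem mul_star_apply_mul {H : Type*} [Group H] [Finite H] (ψ : H →* ℂˣ) (k h : H) :
    (ψ k : ℂ) * star (ψ (k * h) : ℂ) = star (ψ h : ℂ) := by
  rw [map_mul, Units.val_mul, star_mul', ← mul_assoc, mul_comm (ψ k : ℂ),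
    star_mul_self_apply_eq_one, one_mul]

theorem mul_sum_eq_sum_of_map_mul {G R : Type*} [Group G] [Fintype G]
    [NonUnitalNonAssocSemiring R] (W : G → R) (hW : ∀ g h, W (g * h) = W g * W h) (g : G) :
    W g * ∑ k, W k = ∑ k, W k := by
  simp_rw [Finset.mul_sum, ← hW]
  exact Equiv.sum_comp (Equiv.mulLeft g) W

theorem mul_vecMulVec_star_of_unitary {n α : Type*} [Fintype n] [DecidableEq n] [Semiring α]
    [StarRing α] (U : Matrix n n α) (hU : Uᴴ * U = 1) (v : n → α) :
    U * vecMulVec v (star v) = vecMulVec (U *ᵥ v) (star (U *ᵥ v)) * U := by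
  rw [mul_vecMulVec, vecMulVec_mul, star_mulVec, vecMul_vecMul, hU, vecMul_one]

section Character

variable {H R : Type*} [Group H] [Fintype H] [Ring R] [Algebra ℂ R]
  (ψ : H →* ℂˣ) (W X : H → R) (Y : R)

theorem mul_charSum_mul (hWX : ∀ k h, W k * X h * Y = X (k * h) * Y) (k : H) :
    W k * (∑ h, star (ψ h : ℂ) • X h) * Y = (ψ k : ℂ) • ((∑ h, star (ψ h : ℂ) • X h) * Y) := by
  simp_rw [Finset.mul_sum, Finset.sum_mul, Finset.smul_sum, mul_smul_comm, smul_mul_assoc, hWX,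
    smul_smul]
  refine (Finset.sum_congr rfl fun h _ => ?_).trans (Equiv.sum_comp (Equiv.mulLeft k) _)
  rw [Equiv.coe_mulLeft, mul_star_apply_mul]

theorem charProjection_mul_charSum_mul (hWX : ∀ k h, W k * X h * Y = X (k * h) * Y) :
    ((Fintype.card H : ℂ)⁻¹ • ∑ k, star (ψ k : ℂ) • W k) * (∑ h, star (ψ h : ℂ) • X h) * Y
      = (∑ h, star (ψ h : ℂ) • X h) * Y := by
  have hterm : ∀ k, star (ψ k : ℂ) • W k * (∑ h, star (ψ h : ℂ) • X h) * Y
      = (∑ h, star (ψ h : ℂ) • X h) * Y := fun k => by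
    rw [smul_mul_assoc, smul_mul_assoc, mul_charSum_mul ψ W X Y hWX, smul_smul,
      star_mul_self_apply_eq_one, one_smul]
  rw [smul_mul_assoc, smul_mul_assoc, Finset.sum_mul, Finset.sum_mul,
    Finset.sum_congr rfl fun k _ => hterm k, Finset.sum_const, Finset.card_univ,
    ← Nat.cast_smul_eq_nsmul ℂ, smul_smul,
    inv_mul_cancel₀ (Nat.cast_ne_zero.mpr Fintype.card_ne_zero), one_smul]

end Character

theorem A_psi_maps_into_coarse_grained_sector_general
    {G : Type*} [CommGroup G] [Fintype G] {r s : ℕ}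
    (U_R : G → Matrix (Fin r) (Fin r) ℂ)
    (U_S : G → Matrix (Fin s) (Fin s) ℂ)
    (hR_mul : ∀ g h : G, U_R (g * h) = U_R g * U_R h)
    (hR_unitary : ∀ g : G, (U_R g)ᴴ * U_R g = 1)
    (hS_mul : ∀ g h : G, U_S (g * h) = U_S g * U_S h)
    (φ : G → (Fin r → ℂ))
    (hcov : ∀ g h : G, (U_R h).mulVec (φ g) = φ (h * g))
    (Pg : Matrix (Fin r × Fin s) (Fin r × Fin s) ℂ)
    (hPg : Pg = (Fintype.card G : ℂ)⁻¹ • ∑ g : G, (U_R g) ⊗ₖ (U_S g))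
    (Q : G → Matrix (Fin r × Fin s) (Fin r × Fin s) ℂ)
    (hQ : ∀ g : G, Q g = (Matrix.vecMulVec (φ g) (star (φ g))) ⊗ₖ
        (1 : Matrix (Fin s) (Fin s) ℂ))
    (H : Subgroup G) [Fintype H]
    (ψ : H →* ℂˣ)
    (A : Matrix (Fin r × Fin s) (Fin r × Fin s) ℂ)
    (hA : A = ∑ h : H, star ((ψ h : ℂ)) • Q (h : G))
    (Pψ : Matrix (Fin r × Fin s) (Fin r × Fin s) ℂ)
    (hPψ : Pψ = (Nat.card H : ℂ)⁻¹ •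
        ∑ h : H, star ((ψ h : ℂ)) • ((U_R (h : G)) ⊗ₖ (U_S (h : G)))) :
    Pψ * A * Pg = A * Pg := by
  have hcovQ : ∀ k g, (U_R k ⊗ₖ U_S k) * Q g = Q (k * g) * (U_R k ⊗ₖ U_S k) := fun k g => by
    rw [hQ, hQ, ← mul_kronecker_mul, ← mul_kronecker_mul, mul_vecMulVec_star_of_unitary _
      (hR_unitary k), hcov, mul_one, one_mul]
  have hPg_inv : ∀ k, (U_R k ⊗ₖ U_S k) * Pg = Pg := fun k => by
    rw [hPg, mul_smul_comm, mul_sum_eq_sum_of_map_mul (fun g => U_R g ⊗ₖ U_S g)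
      (fun g h => by rw [hR_mul, hS_mul, mul_kronecker_mul])]
  subst hA hPψ
  rw [Nat.card_eq_fintype_card]
  refine charProjection_mul_charSum_mul ψ _ _ Pg fun k h => ?_
  rw [hcovQ, mul_assoc, hPg_inv, Subgroup.coe_mul]

/-- For a subgroup `H ≤ G` whose orientation states form an orthonormal
basis, the operator `A_ψ := ∑_{h ∈ H} conj (ψ h) • Q h` maps the `G`-invariant subspace
into the coarse-grained `H`-charge sector labelled by `ψ`:  `Π_ψ * A_ψ * Π = A_ψ * Π`,
where `Π_ψ := |H|⁻¹ • ∑_{h ∈ H} conj (ψ h) • (U_R h ⊗ₖ U_S h)`. -/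
theorem A_psi_maps_into_coarse_grained_sector
    {G : Type*} [CommGroup G] [Fintype G] [DecidableEq G] {r s : ℕ}
    (U_R : G → Matrix (Fin r) (Fin r) ℂ)
    (U_S : G → Matrix (Fin s) (Fin s) ℂ)
    (hR_mul : ∀ g h : G, U_R (g * h) = U_R g * U_R h)
    (hR_one : U_R 1 = 1)
    (hR_unitary : ∀ g : G, (U_R g)ᴴ * U_R g = 1)
    (hS_mul : ∀ g h : G, U_S (g * h) = U_S g * U_S h)
    (hS_one : U_S 1 = 1)
    (hS_unitary : ∀ g : G, (U_S g)ᴴ * U_S g = 1)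
    (φ : G → (Fin r → ℂ))
    (hcov : ∀ g h : G, (U_R h).mulVec (φ g) = φ (h * g))
    (Pg : Matrix (Fin r × Fin s) (Fin r × Fin s) ℂ)
    (hPg : Pg = (Fintype.card G : ℂ)⁻¹ • ∑ g : G, (U_R g) ⊗ₖ (U_S g))
    (Q : G → Matrix (Fin r × Fin s) (Fin r × Fin s) ℂ)
    (hQ : ∀ g : G, Q g = (Matrix.vecMulVec (φ g) (star (φ g))) ⊗ₖ
        (1 : Matrix (Fin s) (Fin s) ℂ))
    (H : Subgroup G) [Fintype H]
    (horthH : ∀ h h' : H,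
      (∑ i : Fin r, star (φ (h : G) i) * φ (h' : G) i) = if h = h' then 1 else 0)
    (hcompleteH : ∑ h : H, Matrix.vecMulVec (φ (h : G)) (star (φ (h : G)))
        = (1 : Matrix (Fin r) (Fin r) ℂ))
    (ψ : H →* ℂˣ)
    (A : Matrix (Fin r × Fin s) (Fin r × Fin s) ℂ)
    (hA : A = ∑ h : H, star ((ψ h : ℂ)) • Q (h : G))
    (Pψ : Matrix (Fin r × Fin s) (Fin r × Fin s) ℂ)
    (hPψ : Pψ = (Nat.card H : ℂ)⁻¹ •
        ∑ h : H, star ((ψ h : ℂ)) • ((U_R (h : G)) ⊗ₖ (U_S (h : G)))) :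
    Pψ * A * Pg = A * Pg :=
  A_psi_maps_into_coarse_grained_sector_general U_R U_S hR_mul hR_unitary hS_mul φ hcov Pg hPg Q hQ
    H ψ A hA Pψ hPψ
end

section
/- Surjectivity of reduction maps for ideal frames: for every g ∈ G, Q g * Π * Q g = (Fintype.card G : ℂ)⁻¹ • Q g. (Equivalently, the Page–Wootters reduction map R_R^g of an ideal quantum reference frame satisfies R_R^g (R_R^g)† = I_S, so its image is all of the system Hilbert space.) -/
open scoped Kronecker
open Matrix

/-! Sandwiching a term `U_R h ⊗ U_S h` of the twirl `Π` between copies of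
`Q g = |φ g⟩⟨φ g| ⊗ 1` gives `⟨φ g, U_R h φ g⟩ • (|φ g⟩⟨φ g| ⊗ U_S h)`. By covariance the scalar is
`⟨φ g, φ (h * g)⟩`, which orthonormality makes `δ_{h,1}`; so only the `h = 1` term survives,
leaving `|G|⁻¹ • Q g`. -/

theorem Matrix.vecMulVec_mul_mul_vecMulVec {R l m n o : Type*} [CommSemiring R]
    [Fintype m] [Fintype n] (x : l → R) (y : m → R) (M : Matrix m n R) (u : n → R)
    (v : o → R) :
    vecMulVec x y * M * vecMulVec u v = (y ⬝ᵥ M *ᵥ u) • vecMulVec x v := by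
  rw [vecMulVec_mul, vecMulVec_mul_vecMulVec, dotProduct_mulVec, vecMulVec_smul]

theorem Matrix.kronecker_one_mul_kronecker_mul_kronecker_one {R l m : Type*} [CommSemiring R]
    [Fintype l] [Fintype m] [DecidableEq m] (A B : Matrix l l R) (C : Matrix m m R) :
    (A ⊗ₖ (1 : Matrix m m R)) * (B ⊗ₖ C) * (A ⊗ₖ (1 : Matrix m m R)) = (A * B * A) ⊗ₖ C := by
  rw [← mul_kronecker_mul, ← mul_kronecker_mul, Matrix.one_mul, Matrix.mul_one]

theorem dotProduct_mulVec_of_covariant_orthonormal {G R ι : Type*} [Group G] [DecidableEq G]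
    [Semiring R] [Star R] [Fintype ι] (U : G → Matrix ι ι R) (φ : G → ι → R)
    (hcov : ∀ g h : G, U h *ᵥ φ g = φ (h * g))
    (horth : ∀ g h : G, star (φ g) ⬝ᵥ φ h = if g = h then 1 else 0) (g h : G) :
    star (φ g) ⬝ᵥ U h *ᵥ φ g = if h = 1 then 1 else 0 := by
  rw [hcov, horth]
  exact if_congr (by rw [eq_comm, mul_eq_right]) rfl rfl

theorem reduction_map_surjective_ideal_general
    {G : Type*} [Group G] [Fintype G] [DecidableEq G] {r s : ℕ}
    (U_R : G → Matrix (Fin r) (Fin r) ℂ)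
    (U_S : G → Matrix (Fin s) (Fin s) ℂ)
    (hS_one : U_S 1 = 1)
    (φ : G → (Fin r → ℂ))
    (hcov : ∀ g h : G, (U_R h).mulVec (φ g) = φ (h * g))
    (horth : ∀ g h : G,
      (∑ i : Fin r, star (φ g i) * φ h i) = if g = h then 1 else 0)
    (Pg : Matrix (Fin r × Fin s) (Fin r × Fin s) ℂ)
    (hPg : Pg = (Fintype.card G : ℂ)⁻¹ • ∑ g : G, (U_R g) ⊗ₖ (U_S g))
    (Q : G → Matrix (Fin r × Fin s) (Fin r × Fin s) ℂ)
    (hQ : ∀ g : G, Q g = (Matrix.vecMulVec (φ g) (star (φ g))) ⊗ₖ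
        (1 : Matrix (Fin s) (Fin s) ℂ)) :
    ∀ g : G, Q g * Pg * Q g = (Fintype.card G : ℂ)⁻¹ • Q g := by
  intro g
  have hterm : ∀ h : G, Q g * (U_R h ⊗ₖ U_S h) * Q g = if h = 1 then Q g else 0 := by
    intro h
    rw [hQ, kronecker_one_mul_kronecker_mul_kronecker_one, vecMulVec_mul_mul_vecMulVec,
      dotProduct_mulVec_of_covariant_orthonormal U_R φ hcov horth]
    split_ifs with h1
    · rw [h1, hS_one, one_smul]
    · rw [zero_smul, zero_kronecker]
  rw [hPg, Matrix.mul_smul, Matrix.smul_mul, Matrix.mul_sum, Matrix.sum_mul]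
  simp only [hterm, Finset.sum_ite_eq', Finset.mem_univ, if_true]

/-- **Surjectivity of reduction maps for ideal frames.**  For an ideal QRF
(orthonormal orientation basis), for every `g ∈ G` one has
`Q g * Π * Q g = |G|⁻¹ • Q g`, i.e. the Page–Wootters reduction maps satisfy
`R_R^g (R_R^g)† = I_S` and hence are surjective onto the system Hilbert space. -/
theorem reduction_map_surjective_ideal
    {G : Type*} [Group G] [Fintype G] [DecidableEq G] {r s : ℕ}
    (U_R : G → Matrix (Fin r) (Fin r) ℂ)
    (U_S : G → Matrix (Fin s) (Fin s) ℂ)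
    (hR_mul : ∀ g h : G, U_R (g * h) = U_R g * U_R h)
    (hR_one : U_R 1 = 1)
    (hR_unitary : ∀ g : G, (U_R g)ᴴ * U_R g = 1)
    (hS_mul : ∀ g h : G, U_S (g * h) = U_S g * U_S h)
    (hS_one : U_S 1 = 1)
    (hS_unitary : ∀ g : G, (U_S g)ᴴ * U_S g = 1)
    (φ : G → (Fin r → ℂ))
    (hcov : ∀ g h : G, (U_R h).mulVec (φ g) = φ (h * g))
    (horth : ∀ g h : G,
      (∑ i : Fin r, star (φ g i) * φ h i) = if g = h then 1 else 0)
    (hcomplete : ∑ g : G, Matrix.vecMulVec (φ g) (star (φ g))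
        = (1 : Matrix (Fin r) (Fin r) ℂ))
    (Pg : Matrix (Fin r × Fin s) (Fin r × Fin s) ℂ)
    (hPg : Pg = (Fintype.card G : ℂ)⁻¹ • ∑ g : G, (U_R g) ⊗ₖ (U_S g))
    (Q : G → Matrix (Fin r × Fin s) (Fin r × Fin s) ℂ)
    (hQ : ∀ g : G, Q g = (Matrix.vecMulVec (φ g) (star (φ g))) ⊗ₖ
        (1 : Matrix (Fin s) (Fin s) ℂ)) :
    ∀ g : G, Q g * Pg * Q g = (Fintype.card G : ℂ)⁻¹ • Q g :=
  reduction_map_surjective_ideal_general U_R U_S hS_one φ hcov horth Pg hPg Q hQ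
end

section
/- Overlap of fermionic orientation states (non-ideality of the fermionic field QRF): for all real η, λ, the inner product ⟨v η, v λ⟩ := ∑ i, conj (v η i) * (v λ i) equals (1 + Complex.exp (-(Complex.I * (λ - η)))) / 2, and consequently its squared modulus satisfies ‖⟨v η, v λ⟩‖² = 1/2 + Real.cos (η - λ) / 2. In particular the orientation states are not pairwise orthogonal, so the fermionic field QRF is complete but not ideal. -/
/-- Single-site fermionic orientation state `v λ = (|0⟩ + e^{-iλ}|1⟩)/√2`. -/
noncomputable def orientationState (lam : ℝ) : Fin 2 → ℂ :=
  ((Real.sqrt 2 : ℝ) : ℂ)⁻¹ • ![1, Complex.exp (-(Complex.I * lam))]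

open Complex

theorem norm_one_add_exp_mul_I_sq (θ : ℝ) : ‖1 + exp (θ * I)‖ ^ 2 = 2 + 2 * Real.cos θ := by
  rw [exp_mul_I, Complex.sq_norm, normSq_apply]
  simp only [add_re, add_im, one_re, one_im, mul_re, mul_im, I_re, I_im, cos_ofReal_re,
    cos_ofReal_im, sin_ofReal_re, sin_ofReal_im]
  nlinarith [Real.sin_sq_add_cos_sq θ]

theorem star_exp_neg_I_mul_ofReal (x : ℝ) : star (exp (-(I * x))) = exp (I * x) := by
  rw [Complex.star_def, ← exp_conj]
  simp

theorem sum_star_mul_orientationState (η lam : ℝ) :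
    ∑ i : Fin 2, star (orientationState η i) * orientationState lam i
      = (1 + exp (-(I * ((lam : ℂ) - (η : ℂ))))) / 2 := by
  have hnorm : (((Real.sqrt 2 : ℝ) : ℂ)⁻¹) ^ 2 = 2⁻¹ := by
    rw [inv_pow, ← ofReal_pow, Real.sq_sqrt zero_le_two]
    norm_num
  have hphase : exp (I * η) * exp (-(I * lam)) = exp (-(I * ((lam : ℂ) - (η : ℂ)))) := by
    rw [← exp_add]
    ring_nf
  simp only [orientationState, Fin.sum_univ_two, Pi.smul_apply, Matrix.cons_val_zero,
    Matrix.cons_val_one, smul_eq_mul, star_mul', star_inv₀, mul_one, star_exp_neg_I_mul_ofReal]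
  rw [Complex.star_def, conj_ofReal, map_one, mul_one, mul_mul_mul_comm, ← sq, hnorm, hphase]
  ring

/-- **Overlap of fermionic orientation states.**  For all real `η, λ`,
`⟨v η, v λ⟩ = (1 + e^{-i(λ-η)})/2`, and `‖⟨v η, v λ⟩‖² = 1/2 + cos(η-λ)/2`; in
particular the orientation states are not pairwise orthogonal (non-ideal QRF). -/
theorem orientation_state_overlap (η lam : ℝ) :
    (∑ i : Fin 2, star (orientationState η i) * orientationState lam i)
        = (1 + Complex.exp (-(Complex.I * ((lam : ℂ) - (η : ℂ))))) / 2
    ∧ ‖∑ i : Fin 2, star (orientationState η i) * orientationState lam i‖ ^ 2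
        = 1 / 2 + Real.cos (η - lam) / 2 := by
  have hphase : -(I * ((lam : ℂ) - (η : ℂ))) = ((η - lam : ℝ) : ℂ) * I := by
    push_cast
    ring
  refine ⟨sum_star_mul_orientationState η lam, ?_⟩
  rw [sum_star_mul_orientationState, hphase, norm_div, div_pow, norm_one_add_exp_mul_I_sq]
  norm_num
  ring
end

section
/- Fermionic field QRF on a finite vertex set (covariance and freeness): let V be a finite type, j : V → ℝ a parity function, and for λ : V → ℝ define the product orientation state Φ λ : (V → Fin 2) → ℂ by Φ λ x := ∏_{v}, (if x v = 0 then (Real.sqrt 2 : ℂ)⁻¹ else Complex.exp (-(Complex.I * λ v)) * (Real.sqrt 2 : ℂ)⁻¹), and the diagonal gauge action D η : (V → Fin 2) → ℂ by D η x := ∏_{v}, Complex.exp (-(Complex.I * η v * (((x v : ℕ) : ℝ) - j v))). Then: (i) covariance: for all λ η : V → ℝ and all x : V → Fin 2, (D η x) * (Φ λ x) = Complex.exp (Complex.I * ∑ v, η v * j v) * Φ (λ + η) x; (ii) freeness: if there exists c : ℂ such that (D η x) * (Φ λ x) = c * Φ λ x for all x, then for every v : V there is an integer k with η v = 2 * π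 * k. Hence the gauge group acts transitively and freely on the product orientation states, making the fermionic field a complete quantum reference frame. -/
/-- **Fermionic field QRF on a finite vertex set: covariance and freeness.**
With product orientation states `Φ λ` and diagonal gauge action `D η` on the occupation
basis `(V → Fin 2)`:
(i) covariance: `D η x * Φ λ x = e^{i ∑ v, η v · j v} · Φ (λ + η) x`;
(ii) freeness: if `D η` acts on `Φ λ` by an overall constant, then every `η v` is an
integer multiple of `2π`.  Hence the gauge group acts transitively and freely on the
orientation states, making the fermionic field a complete quantum reference frame. -/
theorem fermionic_field_qrf_covariance_freeness
    {V : Type*} [Fintype V] [DecidableEq V] (j : V → ℝ)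
    (Φ : (V → ℝ) → (V → Fin 2) → ℂ)
    (hΦ : ∀ (lam : V → ℝ) (x : V → Fin 2),
      Φ lam x = ∏ v : V, (if x v = 0 then ((Real.sqrt 2 : ℝ) : ℂ)⁻¹
        else Complex.exp (-(Complex.I * lam v)) * ((Real.sqrt 2 : ℝ) : ℂ)⁻¹))
    (D : (V → ℝ) → (V → Fin 2) → ℂ)
    (hD : ∀ (η : V → ℝ) (x : V → Fin 2),
      D η x = ∏ v : V,
        Complex.exp (-(Complex.I * (η v : ℂ) * ((((x v : ℕ) : ℝ) - j v : ℝ) : ℂ)))) :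
    (∀ (lam η : V → ℝ) (x : V → Fin 2),
        D η x * Φ lam x
          = Complex.exp (Complex.I * ((∑ v : V, η v * j v : ℝ) : ℂ)) * Φ (lam + η) x)
    ∧ (∀ (lam η : V → ℝ),
        (∃ c : ℂ, ∀ x : V → Fin 2, D η x * Φ lam x = c * Φ lam x) →
          ∀ v : V, ∃ k : ℤ, η v = 2 * Real.pi * k) := by
  have hb : ∀ b : Fin 2, b = 0 ∨ b = 1 := by decide
  have hs : ((Real.sqrt 2 : ℝ) : ℂ)⁻¹ ≠ 0 := by
    apply inv_ne_zero
    exact_mod_cast Real.sqrt_ne_zero'.mpr (by norm_num)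
  have cov : ∀ (lam η : V → ℝ) (x : V → Fin 2),
      D η x * Φ lam x
        = Complex.exp (Complex.I * ((∑ v : V, η v * j v : ℝ) : ℂ)) * Φ (lam + η) x := by
    intro lam η x
    have hE : Complex.exp (Complex.I * ((∑ v : V, η v * j v : ℝ) : ℂ))
        = ∏ v : V, Complex.exp (Complex.I * ((η v * j v : ℝ) : ℂ)) := by
      rw [← Complex.exp_sum]
      congr 1
      push_cast
      rw [Finset.mul_sum]
    rw [hD, hΦ, hΦ, hE, ← Finset.prod_mul_distrib, ← Finset.prod_mul_distrib]
    refine Finset.prod_congr rfl fun v _ => ?_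
    rcases hb (x v) with h | h
    · simp only [h]
      norm_num
      rw [mul_comm]
      congr 1
      ring
    · simp only [h, Pi.add_apply]
      norm_num
      rw [← mul_assoc, ← mul_assoc, ← Complex.exp_add, ← Complex.exp_add]
      congr 2
      ring
  refine ⟨cov, ?_⟩
  rintro lam η ⟨c, hc⟩ v
  set E := Complex.exp (Complex.I * ((∑ v : V, η v * j v : ℝ) : ℂ)) with hEdef
  have key : ∀ x, E * Φ (lam + η) x = c * Φ lam x := fun x => by rw [← cov, hc]
  have h0 : Φ (lam + η) (fun _ => 0) = Φ lam (fun _ => 0) := by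
    rw [hΦ, hΦ]
    simp
  have hne0 : Φ lam (fun _ => 0) ≠ 0 := by
    rw [hΦ]
    simp only [if_pos rfl]
    exact Finset.prod_ne_zero_iff.mpr fun _ _ => hs
  have hcE : E = c := by
    have h := key (fun _ => 0)
    rw [h0] at h
    exact mul_right_cancel₀ hne0 h
  -- now use the basis state with a single occupied site v
  set x : V → Fin 2 := fun w => if w = v then 1 else 0 with hx
  have hxv : x v = 1 := by simp [hx]
  have hΦx : ∀ μ : V → ℝ, Φ μ x
      = (Complex.exp (-(Complex.I * μ v)) * ((Real.sqrt 2 : ℝ) : ℂ)⁻¹)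
        * ∏ w ∈ Finset.univ.erase v, ((Real.sqrt 2 : ℝ) : ℂ)⁻¹ := by
    intro μ
    rw [hΦ, ← Finset.mul_prod_erase _ _ (Finset.mem_univ v)]
    congr 1
    · rw [hxv]; norm_num
    · refine Finset.prod_congr rfl fun w hw => ?_
      have hwv : w ≠ v := (Finset.mem_erase.mp hw).1
      have : x w = 0 := by simp [hx, hwv]
      rw [this]
      norm_num
  have hQ : (∏ w ∈ Finset.univ.erase v, ((Real.sqrt 2 : ℝ) : ℂ)⁻¹) ≠ 0 :=
    Finset.prod_ne_zero_iff.mpr fun _ _ => hs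
  have hΦeq : Φ (lam + η) x = Φ lam x := by
    have h := key x
    rw [← hcE] at h
    exact mul_left_cancel₀ (Complex.exp_ne_zero _) h
  rw [hΦx, hΦx] at hΦeq
  have h1 : Complex.exp (-(Complex.I * ((lam + η) v))) = Complex.exp (-(Complex.I * lam v)) :=
    mul_right_cancel₀ hs (mul_right_cancel₀ hQ hΦeq)
  rw [Complex.exp_eq_exp_iff_exists_int] at h1
  obtain ⟨n, hn⟩ := h1
  refine ⟨-n, ?_⟩
  have h2 : Complex.I * ((η v : ℂ) + 2 * Real.pi * n) = 0 := by
    simp only [Pi.add_apply, Complex.ofReal_add] at hn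
    linear_combination -hn
  have h3 : (η v : ℂ) + 2 * Real.pi * n = 0 :=
    (mul_eq_zero.mp h2).resolve_left Complex.I_ne_zero
  have h4 : ((η v : ℝ) : ℂ) = ((2 * Real.pi * (-n : ℤ) : ℝ) : ℂ) := by
    push_cast
    linear_combination h3
  exact_mod_cast h4
end
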